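/- arXiv:2408.06269 — 4 statements merged into one kernel-verified Lean document; each statement's English description precedes it below -/
import Mathlib

section
/- Fix ξ > 0 and n ∈ ℕ with n > 2/ξ² - 1. Then the likelihood ratio ℓ_n satisfies: (i) ℓ_n(r) → 0 as r → ∞; (ii) ℓ_n is strictly increasing on [0, r_max] and strictly decreasing on [r_max, ∞), where r_max = √(ξ²(n+1)/2 - 1); and (iii) its maximum value is η_max(n) = ℓ_n(r_max) = e^{1/ξ²} · ( (n+1)ξ²/(2e) )^{(n+1)/2} · η₀(n). -/
/-!
Substituting `t = 1 + r²` writes `ℓ_n(r) = η₀ e^{c} · t^α e^{-c t}` with `α = (n+1)/2` and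
`c = 1/ξ²`. The gamma-type profile `t^α e^{-c t}` has derivative `t^{α-1} e^{-c t} (α - c t)`,
so it increases up to `t = α/c`, decreases afterwards, tends to `0`, and peaks at the value
`(α/(c e))^α`. The hypothesis on `n` says exactly that the peak `t = α/c = (n+1)ξ²/2` lies
beyond `t = 1`, i.e. at a positive radius `r_max`.
-/

open Real MeasureTheory Filter

/-- Isotropic Gaussian density on ℝⁿ: `π^{-n/2} ξ^{-n} exp(-‖y‖²/ξ²)`. -/
noncomputable def pG (ξ : ℝ) (n : ℕ) (y : EuclideanSpace ℝ (Fin n)) : ℝ :=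
  (π ^ ((n : ℝ) / 2) * ξ ^ n)⁻¹ * Real.exp (-‖y‖ ^ 2 / ξ ^ 2)

/-- Isotropic Cauchy density on ℝⁿ: `Γ((n+1)/2) π^{-(n+1)/2} (1+‖y‖²)^{-(n+1)/2}`. -/
noncomputable def pC (n : ℕ) (y : EuclideanSpace ℝ (Fin n)) : ℝ :=
  Real.Gamma (((n : ℝ) + 1) / 2) / π ^ (((n : ℝ) + 1) / 2) *
    (1 + ‖y‖ ^ 2) ^ (-(((n : ℝ) + 1) / 2))

/-- Likelihood ratio `ℓ_n(r) = (√π/(Γ((n+1)/2) ξⁿ)) e^{-r²/ξ²} (1+r²)^{(n+1)/2}`. -/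
noncomputable def ell (ξ : ℝ) (n : ℕ) (r : ℝ) : ℝ :=
  Real.sqrt π / (Real.Gamma (((n : ℝ) + 1) / 2) * ξ ^ n) *
    Real.exp (-r ^ 2 / ξ ^ 2) * (1 + r ^ 2) ^ (((n : ℝ) + 1) / 2)

/-- `η₀(n) = ℓ_n(0)`. -/
noncomputable def eta0 (ξ : ℝ) (n : ℕ) : ℝ := ell ξ n 0

/-- `η_max(n) = sup_{r ≥ 0} ℓ_n(r)`. -/
noncomputable def etaMax (ξ : ℝ) (n : ℕ) : ℝ := sSup (ell ξ n '' Set.Ici 0)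

/-- Miss probability: integral of the Cauchy density over the annulus `a ≤ ‖y‖ ≤ b`. -/
noncomputable def PM (n : ℕ) (a b : ℝ) : ℝ :=
  ∫ y in {y : EuclideanSpace ℝ (Fin n) | a ≤ ‖y‖ ∧ ‖y‖ ≤ b}, pC n y

/-- False-alarm probability: 1 minus the Gaussian mass of the annulus `a ≤ ‖y‖ ≤ b`. -/
noncomputable def PF (ξ : ℝ) (n : ℕ) (a b : ℝ) : ℝ :=
  1 - ∫ y in {y : EuclideanSpace ℝ (Fin n) | a ≤ ‖y‖ ∧ ‖y‖ ≤ b}, pG ξ n y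

/-- The Gaussian Q-function `Q(x) = ∫_x^∞ (2π)^{-1/2} e^{-t²/2} dt`. -/
noncomputable def Qfun (x : ℝ) : ℝ :=
  ∫ t in Set.Ici x, (Real.sqrt (2 * π))⁻¹ * Real.exp (-t ^ 2 / 2)

open Set

section RpowMulExpNegMul

variable {α c : ℝ}

theorem hasDerivAt_rpow_mul_exp_neg_mul {t : ℝ} (ht : 0 < t) :
    HasDerivAt (fun t => t ^ α * exp (-c * t)) (t ^ (α - 1) * exp (-c * t) * (α - c * t)) t := by
  have hexp : HasDerivAt (fun t => exp (-c * t)) (exp (-c * t) * -c) t := by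
    simpa using ((hasDerivAt_id t).const_mul (-c)).exp
  refine ((hasDerivAt_rpow_const (p := α) (Or.inl ht.ne')).mul hexp).congr_deriv ?_
  rw [rpow_sub_one ht.ne']
  field_simp
  ring

theorem strictMonoOn_rpow_mul_exp_neg_mul (hα : 0 ≤ α) (hc : 0 < c) :
    StrictMonoOn (fun t => t ^ α * exp (-c * t)) (Icc 0 (α / c)) := by
  refine strictMonoOn_of_deriv_pos (convex_Icc _ _)
    ((continuous_rpow_const hα).mul (by fun_prop)).continuousOn fun t ht => ?_
  obtain ⟨ht0, htc⟩ : 0 < t ∧ t < α / c := by rwa [interior_Icc] at ht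
  rw [(hasDerivAt_rpow_mul_exp_neg_mul ht0).deriv]
  have : c * t < α := (lt_div_iff₀' hc).mp htc
  exact mul_pos (by positivity) (by linarith)

theorem strictAntiOn_rpow_mul_exp_neg_mul (hα : 0 ≤ α) (hc : 0 < c) :
    StrictAntiOn (fun t => t ^ α * exp (-c * t)) (Ici (α / c)) := by
  refine strictAntiOn_of_deriv_neg (convex_Ici _)
    ((continuous_rpow_const hα).mul (by fun_prop)).continuousOn fun t ht => ?_
  rw [interior_Ici] at ht
  have ht0 : 0 < t := (div_nonneg hα hc.le).trans_lt ht
  rw [(hasDerivAt_rpow_mul_exp_neg_mul ht0).deriv]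
  have : α < c * t := (div_lt_iff₀' hc).mp ht
  exact mul_neg_of_pos_of_neg (by positivity) (by linarith)

theorem rpow_mul_exp_neg_mul_div (hα : 0 ≤ α) (hc : 0 < c) :
    (α / c) ^ α * exp (-c * (α / c)) = (α / c / exp 1) ^ α := by
  have : -c * (α / c) = -α := by field_simp
  rw [div_rpow (div_nonneg hα hc.le) (exp_pos 1).le, exp_one_rpow, this, exp_neg]
  exact (div_eq_mul_inv _ _).symm

end RpowMulExpNegMul

theorem isGreatest_image_Ici_of_monotoneOn_of_antitoneOn {β γ : Type*} [LinearOrder β]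
    [Preorder γ] {f : β → γ} {a b : β} (hab : a ≤ b) (hmono : MonotoneOn f (Icc a b))
    (hanti : AntitoneOn f (Ici b)) : IsGreatest (f '' Ici a) (f b) := by
  refine ⟨mem_image_of_mem f hab, ?_⟩
  rintro _ ⟨x, hx, rfl⟩
  rcases le_total x b with hxb | hbx
  · exact hmono ⟨hx, hxb⟩ ⟨hab, le_rfl⟩ hxb
  · exact hanti le_rfl hbx hbx

section LikelihoodRatio

variable {ξ : ℝ} {n : ℕ}

theorem ell_eq_comp (ξ : ℝ) (n : ℕ) :
    ell ξ n = (eta0 ξ n * exp (1 / ξ ^ 2) * ·) ∘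
      (fun t => t ^ (((n : ℝ) + 1) / 2) * exp (-(1 / ξ ^ 2) * t)) ∘ (fun r => 1 + r ^ 2) := by
  funext r
  have hexp : exp (-r ^ 2 / ξ ^ 2) = exp (1 / ξ ^ 2) * exp (-(1 / ξ ^ 2) * (1 + r ^ 2)) := by
    rw [← exp_add]
    ring_nf
  simp only [Function.comp_apply, eta0, ell, hexp, ne_eq, OfNat.ofNat_ne_zero,
    not_false_eq_true, zero_pow, neg_zero, zero_div, exp_zero, add_zero, one_rpow, mul_one]
  ring

theorem eta0_pos (hξ : 0 < ξ) : 0 < eta0 ξ n := by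
  unfold eta0 ell
  positivity

noncomputable def rMax (ξ : ℝ) (n : ℕ) : ℝ := √(ξ ^ 2 * ((n : ℝ) + 1) / 2 - 1)

/-- The `max` records that `√` of a negative radicand is `0`, i.e. `rMax ξ n = 0` when the
peak of the profile lies below `t = 1`. -/
theorem one_add_rMax_sq (ξ : ℝ) (n : ℕ) :
    1 + rMax ξ n ^ 2 = max ((((n : ℝ) + 1) / 2) / (1 / ξ ^ 2)) 1 := by
  rw [rMax, sq_sqrt', add_comm, ← max_add_add_right, sub_add_cancel, zero_add,
    div_div_eq_mul_div, div_one]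
  ring_nf

theorem one_add_rMax_sq_of_lt (hξ : 0 < ξ) (hn : 2 / ξ ^ 2 - 1 < n) :
    1 + rMax ξ n ^ 2 = (((n : ℝ) + 1) / 2) / (1 / ξ ^ 2) := by
  refine (one_add_rMax_sq ξ n).trans (max_eq_left ?_)
  rw [div_div_eq_mul_div, div_one]
  rw [sub_lt_iff_lt_add, div_lt_iff₀ (by positivity)] at hn
  linarith

theorem tendsto_ell_atTop (hξ : ξ ≠ 0) : Tendsto (ell ξ n) atTop (nhds 0) := by
  rw [ell_eq_comp, ← mul_zero (eta0 ξ n * exp (1 / ξ ^ 2))]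
  exact ((tendsto_rpow_mul_exp_neg_mul_atTop_nhds_zero _ _ (by positivity)).comp
    (tendsto_atTop_add_const_left _ 1 (tendsto_pow_atTop two_ne_zero))).const_mul _

theorem strictMonoOn_one_add_sq : StrictMonoOn (fun r : ℝ => 1 + r ^ 2) (Ici 0) :=
  fun _ ha _ _ hab => add_lt_add_right (pow_lt_pow_left₀ hab ha two_ne_zero) 1

theorem strictMonoOn_ell (hξ : 0 < ξ) (hn : 2 / ξ ^ 2 - 1 < n) :
    StrictMonoOn (ell ξ n) (Icc 0 (rMax ξ n)) := by
  rw [ell_eq_comp]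
  refine (strictMono_mul_left_of_pos (mul_pos (eta0_pos hξ) (exp_pos _))).comp_strictMonoOn
    ((strictMonoOn_rpow_mul_exp_neg_mul (by positivity) (by positivity)).comp
      (strictMonoOn_one_add_sq.mono Icc_subset_Ici_self) fun r hr => ⟨by positivity, ?_⟩)
  rw [← one_add_rMax_sq_of_lt hξ hn]
  exact add_le_add_right (pow_le_pow_left₀ hr.1 hr.2 2) 1

theorem strictAntiOn_ell (hξ : 0 < ξ) : StrictAntiOn (ell ξ n) (Ici (rMax ξ n)) := by
  rw [ell_eq_comp]
  refine (strictMono_mul_left_of_pos (mul_pos (eta0_pos hξ) (exp_pos _))).comp_strictAntiOn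
    ((strictAntiOn_rpow_mul_exp_neg_mul (by positivity) (by positivity)).comp_strictMonoOn
      (strictMonoOn_one_add_sq.mono (Ici_subset_Ici.mpr (sqrt_nonneg _))) fun r hr => ?_)
  refine mem_Ici.mpr ((le_max_left _ 1).trans ?_)
  rw [← one_add_rMax_sq]
  exact add_le_add_right (pow_le_pow_left₀ (sqrt_nonneg _) hr 2) 1

theorem etaMax_eq_ell_rMax (hξ : 0 < ξ) (hn : 2 / ξ ^ 2 - 1 < n) :
    etaMax ξ n = ell ξ n (rMax ξ n) :=
  (isGreatest_image_Ici_of_monotoneOn_of_antitoneOn (sqrt_nonneg _)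
    (strictMonoOn_ell hξ hn).monotoneOn (strictAntiOn_ell hξ).antitoneOn).csSup_eq

theorem ell_rMax (hξ : 0 < ξ) (hn : 2 / ξ ^ 2 - 1 < n) :
    ell ξ n (rMax ξ n) = exp (1 / ξ ^ 2) *
      (((n : ℝ) + 1) * ξ ^ 2 / (2 * exp 1)) ^ (((n : ℝ) + 1) / 2) * eta0 ξ n := by
  rw [ell_eq_comp, Function.comp_apply, Function.comp_apply, one_add_rMax_sq_of_lt hξ hn,
    rpow_mul_exp_neg_mul_div (by positivity) (by positivity), div_div_eq_mul_div, div_one]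
  ring_nf

end LikelihoodRatio

/-- For `n > 2/ξ² - 1`: (i) `ℓ_n(r) → 0` as `r → ∞`; (ii) `ℓ_n` is strictly
increasing on `[0, r_max]` and strictly decreasing on `[r_max, ∞)` where
`r_max = √(ξ²(n+1)/2 - 1)`; (iii) `η_max(n) = ℓ_n(r_max) = e^{1/ξ²}((n+1)ξ²/(2e))^{(n+1)/2}·η₀(n)`. -/
theorem likelihood_ratio_shape
    (ξ : ℝ) (n : ℕ) (hξ : 0 < ξ) (hn : 2 / ξ ^ 2 - 1 < (n : ℝ)) :
    Tendsto (ell ξ n) atTop (nhds 0) ∧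
    StrictMonoOn (ell ξ n) (Set.Icc 0 (Real.sqrt (ξ ^ 2 * ((n : ℝ) + 1) / 2 - 1))) ∧
    StrictAntiOn (ell ξ n) (Set.Ici (Real.sqrt (ξ ^ 2 * ((n : ℝ) + 1) / 2 - 1))) ∧
    etaMax ξ n = ell ξ n (Real.sqrt (ξ ^ 2 * ((n : ℝ) + 1) / 2 - 1)) ∧
    etaMax ξ n = Real.exp (1 / ξ ^ 2) *
      (((n : ℝ) + 1) * ξ ^ 2 / (2 * Real.exp 1)) ^ (((n : ℝ) + 1) / 2) * eta0 ξ n := by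
  exact ⟨tendsto_ell_atTop hξ.ne', strictMonoOn_ell hξ hn, strictAntiOn_ell hξ,
    etaMax_eq_ell_rMax hξ hn, (etaMax_eq_ell_rMax hξ hn).trans (ell_rMax hξ hn)⟩
end

section
/- Fix ξ > 0. The maximum η_max(n) = sup_{r ≥ 0} ℓ_n(r) of the likelihood ratio satisfies η_max(n) ~ e^{1/ξ²} · (ξ/2) · √n as n → ∞; consequently η_max(n)^{2/(n+1)} → 1 as n → ∞. -/
open Real MeasureTheory Filter

/-!
For `(n + 1) ξ² ≥ 2` the bound `x ≤ e^{x-1}`, applied at `x = (1 + r²) / ((n + 1) ξ² / 2)`, shows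
that `ℓ_n` is maximised at `r² = (n + 1) ξ² / 2 - 1`, which gives the closed form
`η_max(n) = e^{1/ξ²} (ξ/2) √(n+1) / G((n+1)/2)` with `G(s) = Γ(s) / (√(2π/s) (s/e)^s)`.
So everything reduces to Stirling's formula `G(s) → 1` along the half-integers. The Legendre
duplication formula gives `G(s)² = G(2s) · √s Γ(s) / Γ(s + 1/2)`; the first factor tends to `1`
by Stirling's formula for factorials, the second by the log-convexity of `Γ`.
The second limit only needs `log η_max(n) = O(log n)`.
-/

open Topology

namespace Real

theorem Gamma_midpoint_sq_le {a b : ℝ} (ha : 0 < a) (hb : 0 < b) :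
    Gamma ((a + b) / 2) ^ 2 ≤ Gamma a * Gamma b := by
  have h := Gamma_mul_add_mul_le_rpow_Gamma_mul_rpow_Gamma ha hb one_half_pos one_half_pos
    (add_halves 1)
  rw [show 1 / 2 * a + 1 / 2 * b = (a + b) / 2 by ring] at h
  calc Gamma ((a + b) / 2) ^ 2 ≤ (Gamma a ^ (1 / 2 : ℝ) * Gamma b ^ (1 / 2 : ℝ)) ^ 2 := by
        gcongr
    _ = Gamma a * Gamma b := by
        rw [mul_pow, ← rpow_mul_natCast (Gamma_pos_of_pos ha).le,
          ← rpow_mul_natCast (Gamma_pos_of_pos hb).le]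
        norm_num

theorem Gamma_add_half_le_sqrt_mul_Gamma {x : ℝ} (hx : 0 < x) :
    Gamma (x + 1 / 2) ≤ √x * Gamma x := by
  have h := Gamma_midpoint_sq_le hx (by positivity : 0 < x + 1)
  rw [show (x + (x + 1)) / 2 = x + 1 / 2 by ring, Gamma_add_one hx.ne'] at h
  rw [← sq_le_sq₀ (Gamma_pos_of_pos (by positivity)).le (by positivity), mul_pow,
    sq_sqrt hx.le]
  linarith

theorem sqrt_mul_Gamma_le_Gamma_add_half {x : ℝ} (hx : 0 < x) :
    √x * Gamma x ≤ √(1 + 1 / (2 * x)) * Gamma (x + 1 / 2) := by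
  have h := Gamma_midpoint_sq_le (a := x + 1 / 2) (b := x + 1 / 2 + 1) (by positivity)
    (by positivity)
  rw [show (x + 1 / 2 + (x + 1 / 2 + 1)) / 2 = x + 1 by ring, Gamma_add_one hx.ne',
    Gamma_add_one (by positivity)] at h
  set g := Gamma (x + 1 / 2)
  rw [← sq_le_sq₀ (by positivity) (by positivity), mul_pow, mul_pow, sq_sqrt hx.le,
    sq_sqrt (by positivity)]
  refine le_of_mul_le_mul_left ?_ hx
  calc x * (x * Gamma x ^ 2) = (x * Gamma x) ^ 2 := by ring
    _ ≤ (x + 1 / 2) * g ^ 2 := by linarith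
    _ = x * ((1 + 1 / (2 * x)) * g ^ 2) := by field_simp

theorem tendsto_sqrt_mul_Gamma_div_Gamma_add_half :
    Tendsto (fun x => √x * Gamma x / Gamma (x + 1 / 2)) atTop (𝓝 1) := by
  have hupper : Tendsto (fun x : ℝ => √(1 + 1 / (2 * x))) atTop (𝓝 1) := by
    have h : Tendsto (fun x : ℝ => 1 + 1 / (2 * x)) atTop (𝓝 (1 + 0)) :=
      (tendsto_const_nhds.div_atTop (tendsto_id.const_mul_atTop two_pos)).const_add 1
    simpa using h.sqrt
  refine tendsto_of_tendsto_of_tendsto_of_le_of_le' tendsto_const_nhds hupper ?_ ?_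
  all_goals filter_upwards [eventually_gt_atTop 0] with x hx
  · rw [one_le_div (Gamma_pos_of_pos (by positivity))]
    exact Gamma_add_half_le_sqrt_mul_Gamma hx
  · rw [div_le_iff₀ (Gamma_pos_of_pos (by positivity))]
    exact sqrt_mul_Gamma_le_Gamma_add_half hx

noncomputable def gammaStirlingRatio (s : ℝ) : ℝ := Gamma s * √s * exp s / (√(2 * π) * s ^ s)

theorem gammaStirlingRatio_natCast {n : ℕ} (hn : n ≠ 0) :
    gammaStirlingRatio n = Stirling.stirlingSeq n / √π := by
  obtain ⟨k, rfl⟩ := Nat.exists_eq_succ_of_ne_zero hn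
  rw [gammaStirlingRatio, Stirling.stirlingSeq, rpow_natCast, div_pow, exp_one_pow,
    Nat.factorial_succ, Nat.cast_mul, Nat.cast_succ, Gamma_nat_eq_factorial,
    sqrt_mul' _ (by positivity), sqrt_mul zero_le_two]
  have : √((k : ℝ) + 1) ^ 2 = k + 1 := sq_sqrt (by positivity)
  field_simp
  rw [this]

theorem gammaStirlingRatio_sq {s : ℝ} (hs : 0 < s) :
    gammaStirlingRatio s ^ 2 =
      gammaStirlingRatio (2 * s) * (√s * Gamma s / Gamma (s + 1 / 2)) := by
  have hdup := Gamma_mul_Gamma_add_half s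
  have hpow : (2 * s) ^ (2 * s) = (2 : ℝ) ^ (2 * s) * (s ^ s) ^ 2 := by
    rw [mul_rpow zero_le_two hs.le, ← rpow_mul_natCast hs.le]; push_cast; ring_nf
  have htwo : (2 : ℝ) ^ (1 - 2 * s) = 2 / 2 ^ (2 * s) := by
    rw [rpow_sub two_pos, rpow_one]
  have hexp : exp (2 * s) = exp s ^ 2 := by rw [← exp_nat_mul]; norm_num
  have hΓ2 : Gamma (2 * s) = Gamma s * Gamma (s + 1 / 2) * 2 ^ (2 * s) / (2 * √π) := by
    rw [hdup, htwo]; field_simp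
  rw [gammaStirlingRatio, gammaStirlingRatio, hpow, hexp, sqrt_mul' _ hs.le, hΓ2,
    sqrt_mul zero_le_two π]
  have h2 : √2 ^ 2 = 2 := sq_sqrt zero_le_two
  field_simp
  rw [h2]

theorem gammaStirlingRatio_pos {s : ℝ} (hs : 0 < s) : 0 < gammaStirlingRatio s := by
  unfold gammaStirlingRatio
  positivity

theorem tendsto_gammaStirlingRatio_natCast :
    Tendsto (fun n : ℕ => gammaStirlingRatio n) atTop (𝓝 1) := by
  have h := Stirling.tendsto_stirlingSeq_sqrt_pi.div_const √π
  rw [div_self (sqrt_ne_zero'.mpr pi_pos)] at h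
  refine h.congr' ?_
  filter_upwards [eventually_ne_atTop 0] with n hn
  rw [gammaStirlingRatio_natCast hn]

theorem tendsto_gammaStirlingRatio_half_natCast :
    Tendsto (fun m : ℕ => gammaStirlingRatio (m / 2)) atTop (𝓝 1) := by
  have hhalf : Tendsto (fun m : ℕ => (m : ℝ) / 2) atTop atTop :=
    tendsto_natCast_atTop_atTop.atTop_div_const two_pos
  have hsq : Tendsto (fun m : ℕ => gammaStirlingRatio (m / 2) ^ 2) atTop (𝓝 1) := by
    have h := tendsto_gammaStirlingRatio_natCast.mul
      (tendsto_sqrt_mul_Gamma_div_Gamma_add_half.comp hhalf)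
    rw [mul_one] at h
    refine h.congr' ?_
    filter_upwards [eventually_ne_atTop 0] with m hm
    rw [gammaStirlingRatio_sq (by positivity), mul_div_cancel₀ _ two_ne_zero, Function.comp_apply]
  have h := hsq.sqrt
  rw [sqrt_one] at h
  refine h.congr' ?_
  filter_upwards [eventually_ne_atTop 0] with m hm
  exact sqrt_sq (gammaStirlingRatio_pos (by positivity)).le

theorem exp_neg_div_mul_one_add_rpow_le {s c u : ℝ} (hs : 0 < s) (hc : 0 < c) (hu : 0 ≤ 1 + u) :
    exp (-u / c) * (1 + u) ^ s ≤ exp (1 / c - s) * (s * c) ^ s := by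
  have hsc : 0 < s * c := mul_pos hs hc
  have h : 1 + u ≤ s * c * exp ((1 + u) / (s * c) - 1) := by
    have := add_one_le_exp ((1 + u) / (s * c) - 1)
    rwa [sub_add_cancel, div_le_iff₀' hsc] at this
  calc exp (-u / c) * (1 + u) ^ s ≤ exp (-u / c) * (s * c * exp ((1 + u) / (s * c) - 1)) ^ s := by
        gcongr
    _ = exp (-u / c + ((1 + u) / (s * c) - 1) * s) * (s * c) ^ s := by
        rw [mul_rpow hsc.le (exp_pos _).le, ← exp_mul, exp_add]
        ring
    _ = exp (1 / c - s) * (s * c) ^ s := by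
        congr 2
        field_simp
        ring

end Real

theorem isGreatest_ell {ξ : ℝ} (hξ : 0 < ξ) {n : ℕ} (hn : 2 ≤ ((n : ℝ) + 1) * ξ ^ 2) :
    IsGreatest (ell ξ n '' Set.Ici 0) (√π / (Gamma (((n : ℝ) + 1) / 2) * ξ ^ n) *
      (exp (1 / ξ ^ 2 - ((n : ℝ) + 1) / 2) * (((n : ℝ) + 1) / 2 * ξ ^ 2) ^ (((n : ℝ) + 1) / 2))) := by
  have hsξ : 0 ≤ ((n : ℝ) + 1) / 2 * ξ ^ 2 - 1 := by linarith
  set s : ℝ := ((n : ℝ) + 1) / 2 with hs_def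
  have hs : 0 < s := by positivity
  refine ⟨⟨√(s * ξ ^ 2 - 1), sqrt_nonneg _, ?_⟩, ?_⟩
  · rw [ell, ← hs_def, sq_sqrt hsξ, mul_assoc, add_sub_cancel]
    congr 3
    field_simp
    ring
  · rintro _ ⟨r, -, rfl⟩
    rw [ell, ← hs_def, mul_assoc]
    exact mul_le_mul_of_nonneg_left
      (exp_neg_div_mul_one_add_rpow_le hs (by positivity) (by positivity)) (by positivity)

theorem etaMax_eq {ξ : ℝ} (hξ : 0 < ξ) {n : ℕ} (hn : 2 ≤ ((n : ℝ) + 1) * ξ ^ 2) :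
    etaMax ξ n = exp (1 / ξ ^ 2) * (ξ / 2) * √((n : ℝ) + 1) /
      gammaStirlingRatio (((n : ℝ) + 1) / 2) := by
  rw [etaMax, (isGreatest_ell hξ hn).csSup_eq, gammaStirlingRatio]
  set s : ℝ := ((n : ℝ) + 1) / 2 with hs_def
  have hs : 0 < s := by positivity
  have hpow : (s * ξ ^ 2) ^ s = s ^ s * ξ ^ (n + 1) := by
    rw [mul_rpow hs.le (by positivity), ← rpow_natCast ξ 2, ← rpow_mul hξ.le,
      show ((2 : ℕ) : ℝ) * s = ((n + 1 : ℕ) : ℝ) by rw [hs_def]; push_cast; ring, rpow_natCast]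
  have hn1 : √((n : ℝ) + 1) = √2 * √s := by
    rw [← sqrt_mul zero_le_two]; congr 1; ring
  rw [hpow, hn1, sqrt_mul zero_le_two, exp_sub]
  field_simp
  rw [sq_sqrt zero_le_two]
  ring

theorem tendsto_rpow_two_div_add_one_of_tendsto_div_sqrt {a : ℕ → ℝ} {c : ℝ} (hc : 0 < c)
    (h : Tendsto (fun n => a n / (c * √n)) atTop (𝓝 1)) :
    Tendsto (fun n : ℕ => a n ^ (2 / ((n : ℝ) + 1))) atTop (𝓝 1) := by
  have hpos : ∀ᶠ n : ℕ in atTop, 0 < a n / (c * √n) ∧ 0 < (n : ℝ) :=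
    (h.eventually (lt_mem_nhds one_pos)).and
      (tendsto_natCast_atTop_atTop.eventually (eventually_gt_atTop 0))
  have hlog : Tendsto (fun n => log (a n / (c * √n)) + log c) atTop (𝓝 (0 + log c)) := by
    have := (continuousAt_log one_ne_zero).tendsto.comp h
    rw [log_one] at this
    exact this.add_const _
  have hinv : Tendsto (fun n : ℕ => 2 / ((n : ℝ) + 1)) atTop (𝓝 0) :=
    tendsto_const_nhds.div_atTop (tendsto_atTop_add_const_right _ 1 tendsto_natCast_atTop_atTop)
  have hlogn : Tendsto (fun n : ℕ => log n / ((n : ℝ) + 1)) atTop (𝓝 0) := by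
    simpa [Function.comp_def] using (tendsto_pow_log_div_mul_add_atTop 1 1 1 one_ne_zero).comp
      tendsto_natCast_atTop_atTop
  have hexponent := (hinv.mul hlog).add hlogn
  rw [zero_mul, zero_add] at hexponent
  have := (continuous_exp.tendsto 0).comp hexponent
  rw [exp_zero] at this
  refine this.congr' ?_
  filter_upwards [hpos] with n ⟨hq, hn⟩
  have ha : 0 < a n := (div_pos_iff_of_pos_right (by positivity)).mp hq
  have hloga : log (a n) = log (a n / (c * √n)) + log c + log n / 2 := by
    rw [log_div ha.ne' (by positivity), log_mul hc.ne' (by positivity), log_sqrt hn.le]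
    ring
  rw [Function.comp_apply, rpow_def_of_pos ha, hloga]
  congr 1
  ring

/-- `η_max(n) ~ e^{1/ξ²}·(ξ/2)·√n`, and consequently
`η_max(n)^{2/(n+1)} → 1`. -/
theorem etaMax_asymptotics
    (ξ : ℝ) (hξ : 0 < ξ) :
    Tendsto (fun n : ℕ => etaMax ξ n / (Real.exp (1 / ξ ^ 2) * (ξ / 2) * Real.sqrt n))
      atTop (nhds 1) ∧
    Tendsto (fun n : ℕ => etaMax ξ n ^ (2 / ((n : ℝ) + 1))) atTop (nhds 1) := by
  have hmax : ∀ᶠ n : ℕ in atTop, 2 ≤ ((n : ℝ) + 1) * ξ ^ 2 :=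
    ((tendsto_atTop_add_const_right _ 1 tendsto_natCast_atTop_atTop).atTop_mul_const
      (by positivity)).eventually_ge_atTop 2
  have hG : Tendsto (fun n : ℕ => gammaStirlingRatio (((n : ℝ) + 1) / 2)) atTop (𝓝 1) := by
    simpa [Function.comp_def] using
      tendsto_gammaStirlingRatio_half_natCast.comp (tendsto_add_atTop_nat 1)
  have hsqrt : Tendsto (fun n : ℕ => √(1 + 1 / (n : ℝ))) atTop (𝓝 1) := by
    simpa using ((tendsto_const_div_atTop_nhds_zero_nat 1).const_add 1).sqrt
  have hratio : Tendsto (fun n : ℕ => etaMax ξ n / (exp (1 / ξ ^ 2) * (ξ / 2) * √n))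
      atTop (𝓝 1) := by
    have h := hsqrt.div hG one_ne_zero
    rw [div_one] at h
    refine h.congr' ?_
    filter_upwards [hmax, eventually_gt_atTop 0] with n hn hn0
    rw [Pi.div_apply, etaMax_eq hξ hn, show 1 + 1 / (n : ℝ) = ((n : ℝ) + 1) / n by field_simp,
      sqrt_div' _ (Nat.cast_nonneg n)]
    field_simp
  exact ⟨hratio, tendsto_rpow_two_div_add_one_of_tendsto_div_sqrt (by positivity) hratio⟩
end

section
/- Let n ∈ ℕ, n ≥ 1, and 0 < a < b. Then the integral of the isotropic Cauchy density over the annulus {y ∈ ℝ^n : a ≤ ‖y‖ ≤ b} equals (1/√π) · (Γ((n+1)/2)/Γ(n/2)) · ∫_{1/b²}^{1/a²} (1 + u)^{-(n+1)/2} u^{-1/2} du. -/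
open Real MeasureTheory Filter

/-! The density is radial, so polar coordinates turn the annulus integral into
`(2 π^{n/2} / Γ(n/2)) ∫_a^b r^{n-1} (1 + r²)^{-(n+1)/2} dr`, the prefactor being the area
`n · vol(B₁)` of the unit sphere. The substitution `u = 1/r²` turns the `u`-integral into twice
the same radial integral, and `π^{(n+1)/2} = π^{n/2} √π` matches the constants. -/

open Set

section

variable {F : Type*} [NormedAddCommGroup F] [NormedSpace ℝ F]

theorem natCast_mul_volume_real_unitBall (n : ℕ) [NeZero n] :
    n * volume.real (Metric.ball (0 : EuclideanSpace ℝ (Fin n)) 1) =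
      2 * π ^ ((n : ℝ) / 2) / Gamma ((n : ℝ) / 2) := by
  have hn : (n : ℝ) ≠ 0 := NeZero.ne _
  have hΓ : Gamma ((n : ℝ) / 2 + 1) = (n / 2) * Gamma (n / 2) := Gamma_add_one (by positivity)
  have hπ : √π ^ n = π ^ ((n : ℝ) / 2) := by
    rw [sqrt_eq_rpow, ← rpow_natCast, ← rpow_mul pi_pos.le]
    ring_nf
  rw [measureReal_def, EuclideanSpace.volume_ball, Fintype.card_fin, ENNReal.ofReal_one, one_pow,
    one_mul, ENNReal.toReal_ofReal (by positivity), hΓ, hπ]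
  field_simp

theorem integral_fun_norm_euclideanSpace (n : ℕ) [NeZero n] (f : ℝ → F) :
    ∫ y : EuclideanSpace ℝ (Fin n), f ‖y‖ =
      (2 * π ^ ((n : ℝ) / 2) / Gamma ((n : ℝ) / 2)) • ∫ r in Ioi (0 : ℝ), r ^ (n - 1) • f r := by
  rw [integral_fun_norm_addHaar, finrank_euclideanSpace_fin, ← Nat.cast_smul_eq_nsmul ℝ, smul_smul,
    natCast_mul_volume_real_unitBall]

theorem setIntegral_annulus_fun_norm_euclideanSpace (n : ℕ) [NeZero n] {a b : ℝ} (ha : 0 < a)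
    (hab : a ≤ b) (f : ℝ → F) :
    ∫ y in {y : EuclideanSpace ℝ (Fin n) | a ≤ ‖y‖ ∧ ‖y‖ ≤ b}, f ‖y‖ =
      (2 * π ^ ((n : ℝ) / 2) / Gamma ((n : ℝ) / 2)) • ∫ r in a..b, r ^ (n - 1) • f r := by
  have hset : {y : EuclideanSpace ℝ (Fin n) | a ≤ ‖y‖ ∧ ‖y‖ ≤ b} = norm ⁻¹' Icc a b := rfl
  rw [hset, ← integral_indicator (measurableSet_Icc.preimage measurable_norm)]
  simp_rw [show ∀ y : EuclideanSpace ℝ (Fin n), (norm ⁻¹' Icc a b).indicator (fun y => f ‖y‖) y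
    = (Icc a b).indicator f ‖y‖ from fun _ => indicator_comp_right (g := f) norm]
  rw [integral_fun_norm_euclideanSpace]
  simp_rw [← indicator_smul_apply (Icc a b) (fun r : ℝ => r ^ (n - 1)) f]
  rw [setIntegral_indicator measurableSet_Icc, inter_eq_right.mpr ((Icc_subset_Ioi_iff hab).mpr ha),
    integral_Icc_eq_integral_Ioc, intervalIntegral.integral_of_le hab]

theorem integral_comp_inv_sq {a b : ℝ} (ha : 0 < a) (hb : 0 < b) (G : ℝ → F) :
    ∫ u in (b ^ 2)⁻¹..(a ^ 2)⁻¹, G u = ∫ r in a..b, (2 / r ^ 3) • G (r ^ 2)⁻¹ := by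
  have hpos : ∀ r ∈ uIcc a b, 0 < r := fun r hr => lt_of_lt_of_le (lt_min ha hb) hr.1
  have hderiv : ∀ r ∈ Ioo (min a b) (max a b),
      HasDerivAt (fun r : ℝ => (r ^ 2)⁻¹) (-(2 / r ^ 3)) r := by
    intro r hr
    have hr0 : r ≠ 0 := (hpos r (Ioo_subset_Icc_self hr)).ne'
    exact ((hasDerivAt_pow 2 r).fun_inv (pow_ne_zero 2 hr0)).congr_deriv (by field_simp; ring)
  have hcont : ContinuousOn (fun r : ℝ => (r ^ 2)⁻¹) (uIcc a b) :=
    (continuousOn_pow 2).inv₀ fun r hr => pow_ne_zero 2 (hpos r hr).ne'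
  have hnonpos : ∀ r ∈ Ioo (min a b) (max a b), -(2 / r ^ 3) ≤ 0 := fun r hr =>
    neg_nonpos.mpr (by have := hpos r (Ioo_subset_Icc_self hr); positivity)
  rw [intervalIntegral.integral_symm,
    ← intervalIntegral.integral_deriv_smul_comp_of_deriv_nonpos hcont hderiv hnonpos,
    ← intervalIntegral.integral_neg]
  simp only [Function.comp_apply, neg_smul, neg_neg]

end

theorem inv_sq_rpow_neg_half {r : ℝ} (hr : 0 ≤ r) : ((r ^ 2)⁻¹) ^ (-(1 : ℝ) / 2) = r := by
  rw [neg_div, inv_rpow (by positivity), rpow_neg (by positivity), inv_inv, ← sqrt_eq_rpow,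
    sqrt_sq hr]

theorem one_add_inv_sq_rpow_neg {r : ℝ} (hr : 0 < r) (s : ℝ) :
    (1 + (r ^ 2)⁻¹) ^ (-s) = r ^ (2 * s) * (1 + r ^ 2) ^ (-s) := by
  have h : 1 + (r ^ 2)⁻¹ = (1 + r ^ 2) * (r ^ 2)⁻¹ := by field_simp; ring
  rw [h, mul_rpow (by positivity) (by positivity), inv_rpow (by positivity),
    rpow_neg (sq_nonneg r) s, inv_inv, ← rpow_natCast, ← rpow_mul hr.le, Nat.cast_ofNat, mul_comm]

theorem two_div_cube_mul_cauchy_comp_inv_sq {n : ℕ} (hn : 1 ≤ n) {r : ℝ} (hr : 0 < r) :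
    2 / r ^ 3 * ((1 + (r ^ 2)⁻¹) ^ (-(((n : ℝ) + 1) / 2)) * ((r ^ 2)⁻¹) ^ (-(1 : ℝ) / 2)) =
      2 * (r ^ (n - 1) * (1 + r ^ 2) ^ (-(((n : ℝ) + 1) / 2))) := by
  have hpow : r ^ (2 * (((n : ℝ) + 1) / 2)) = r ^ (n - 1) * r ^ 2 := by
    rw [mul_div_cancel₀ _ two_ne_zero, ← pow_add, ← Nat.cast_add_one, rpow_natCast]
    congr 1
    omega
  rw [one_add_inv_sq_rpow_neg hr, inv_sq_rpow_neg_half hr.le, hpow]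
  field_simp

/-- The Cauchy mass of the annulus `a ≤ ‖y‖ ≤ b` equals
`(1/√π)·(Γ((n+1)/2)/Γ(n/2))·∫_{1/b²}^{1/a²} (1+u)^{-(n+1)/2} u^{-1/2} du`. -/
theorem cauchy_annulus_integral
    (n : ℕ) (hn : 1 ≤ n) (a b : ℝ) (ha : 0 < a) (hab : a < b) :
    (∫ y in {y : EuclideanSpace ℝ (Fin n) | a ≤ ‖y‖ ∧ ‖y‖ ≤ b}, pC n y) =
      (1 / Real.sqrt π) * (Real.Gamma (((n : ℝ) + 1) / 2) / Real.Gamma ((n : ℝ) / 2)) *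
        ∫ u in (1 / b ^ 2)..(1 / a ^ 2),
          (1 + u) ^ (-(((n : ℝ) + 1) / 2)) * u ^ (-(1 : ℝ) / 2) := by
  have : NeZero n := ⟨by omega⟩
  simp only [pC]
  set p : ℝ := ((n : ℝ) + 1) / 2 with hp
  set I := ∫ r in a..b, r ^ (n - 1) * (1 + r ^ 2) ^ (-p)
  have hpolar : ∫ y in {y : EuclideanSpace ℝ (Fin n) | a ≤ ‖y‖ ∧ ‖y‖ ≤ b}, (1 + ‖y‖ ^ 2) ^ (-p) =
      2 * π ^ ((n : ℝ) / 2) / Gamma ((n : ℝ) / 2) * I :=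
    setIntegral_annulus_fun_norm_euclideanSpace n ha hab.le fun r => (1 + r ^ 2) ^ (-p)
  have hsubst : ∫ u in (1 / b ^ 2)..(1 / a ^ 2), (1 + u) ^ (-p) * u ^ (-(1 : ℝ) / 2) = 2 * I := by
    simp only [one_div]
    rw [integral_comp_inv_sq ha (ha.trans hab), ← intervalIntegral.integral_const_mul]
    refine intervalIntegral.integral_congr fun r hr => two_div_cube_mul_cauchy_comp_inv_sq hn ?_
    rw [uIcc_of_le hab.le] at hr
    exact ha.trans_le hr.1
  have hπ : π ^ p = π ^ ((n : ℝ) / 2) * √π := by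
    rw [sqrt_eq_rpow, ← rpow_add pi_pos, hp, add_div]
  rw [integral_const_mul, hpolar, hsubst, hπ]
  field_simp
end

section
/- Let n ∈ ℕ, n ≥ 1, and 0 < a < b. Then the integral of the isotropic Cauchy density over the annulus satisfies the lower bound ∫_{{y ∈ ℝ^n : a ≤ ‖y‖ ≤ b}} p_C(y) dy ≥ (1/√π) · (Γ((n+1)/2)/Γ(n/2)) · √(2/(n+1)) · ∫_{(n+1)/(2b²)}^{(n+1)/(2a²)} t^{-1/2} e^{-t} dt. -/
/-! In polar coordinates the Cauchy mass of the annulus is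
`2 Γ((n+1)/2) / (√π Γ(n/2)) · ∫_a^b r^(n-1) (1 + r²)^(-(n+1)/2) dr`, and the substitution
`t = (n+1)/(2r²)` turns the right-hand side into the same constant times
`∫_a^b r^(-2) exp(-(n+1)/(2r²)) dr`. The integrands compare pointwise since
`(1 + r^(-2))^((n+1)/2) ≤ exp((n+1)/(2r²))`, which is `1 + x ≤ eˣ`. -/

open Real MeasureTheory Filter

open Set intervalIntegral

theorem Real.one_add_rpow_le_exp_mul {u p : ℝ} (hu : -1 ≤ u) (hp : 0 ≤ p) :
    (1 + u) ^ p ≤ exp (p * u) := by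
  rw [mul_comm, exp_mul]
  exact rpow_le_rpow (by linarith) (by linarith [add_one_le_exp u]) hp

theorem Real.exp_neg_div_le_div_one_add_rpow {x p : ℝ} (hx : 0 < x) (hp : 0 ≤ p) :
    exp (-p / x) ≤ (x / (1 + x)) ^ p := by
  have h := one_add_rpow_le_exp_mul (u := x⁻¹) (by linarith [inv_pos.2 hx]) hp
  calc exp (-p / x) = (exp (p * x⁻¹))⁻¹ := by rw [← exp_neg, neg_div, div_eq_mul_inv]
    _ ≤ ((1 + x⁻¹) ^ p)⁻¹ := inv_anti₀ (by positivity) h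
    _ = (x / (1 + x)) ^ p := by
      rw [← inv_rpow (by positivity)]
      congr 1
      field_simp
      ring

theorem inv_sq_mul_exp_neg_div_sq_le {n : ℕ} (hn : 1 ≤ n) {r : ℝ} (hr : 0 < r) :
    (r ^ 2)⁻¹ * exp (-(((n : ℝ) + 1) / 2) / r ^ 2) ≤
      r ^ (n - 1) * (1 + r ^ 2) ^ (-(((n : ℝ) + 1) / 2)) := by
  set p : ℝ := ((n : ℝ) + 1) / 2
  have hr2 : (r ^ 2) ^ p = r ^ (n - 1) * r ^ 2 := by
    rw [← pow_add, show n - 1 + 2 = n + 1 by omega, ← rpow_natCast, ← rpow_natCast r,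
      ← rpow_mul hr.le]
    congr 1
    push_cast [hn]
    ring
  calc (r ^ 2)⁻¹ * exp (-p / r ^ 2) ≤ (r ^ 2)⁻¹ * (r ^ 2 / (1 + r ^ 2)) ^ p := by
        gcongr
        exact exp_neg_div_le_div_one_add_rpow (by positivity) (by positivity)
    _ = r ^ (n - 1) * (1 + r ^ 2) ^ (-p) := by
      rw [div_rpow (by positivity) (by positivity), rpow_neg (by positivity), hr2]
      field_simp

theorem MeasureTheory.integral_annulus_fun_norm_addHaar {E F : Type*} [NormedAddCommGroup E]
    [NormedSpace ℝ E] [Nontrivial E] [FiniteDimensional ℝ E] [MeasurableSpace E] [BorelSpace E]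
    (μ : Measure E) [μ.IsAddHaarMeasure] [NormedAddCommGroup F] [NormedSpace ℝ F]
    (f : ℝ → F) {a b : ℝ} (ha : 0 ≤ a) (hab : a ≤ b) :
    ∫ y in {y : E | a ≤ ‖y‖ ∧ ‖y‖ ≤ b}, f ‖y‖ ∂μ =
      Module.finrank ℝ E • μ.real (Metric.ball 0 1) •
        ∫ r in a..b, r ^ (Module.finrank ℝ E - 1) • f r := by
  have hS : {y : E | a ≤ ‖y‖ ∧ ‖y‖ ≤ b} = norm ⁻¹' Icc a b := rfl
  have hind : indicator (norm ⁻¹' Icc a b) (fun y : E => f ‖y‖) =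
      fun y => indicator (Icc a b) f ‖y‖ := funext fun _ => indicator_comp_right _
  rw [hS, ← integral_indicator (measurableSet_Icc.preimage measurable_norm), hind,
    integral_fun_norm_addHaar μ (indicator (Icc a b) f), ← integral_Ici_eq_integral_Ioi]
  simp only [← indicator_smul_apply (Icc a b) (fun r : ℝ => r ^ (Module.finrank ℝ E - 1)) f]
  rw [setIntegral_indicator measurableSet_Icc,
    inter_eq_self_of_subset_right (Icc_subset_Ici_iff hab |>.2 ha),
    integral_Icc_eq_integral_Ioc, ← integral_of_le hab]

theorem EuclideanSpace.nsmul_measureReal_ball_zero_one {n : ℕ} (hn : n ≠ 0) :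
    n • volume.real (Metric.ball (0 : EuclideanSpace ℝ (Fin n)) 1) =
      2 * √π ^ n / Gamma (n / 2) := by
  have : Nonempty (Fin n) := ⟨⟨0, Nat.pos_of_ne_zero hn⟩⟩
  have hn' : (0 : ℝ) < n / 2 := by positivity
  rw [measureReal_def, EuclideanSpace.volume_ball, Fintype.card_fin, ENNReal.ofReal_one, one_pow,
    one_mul, ENNReal.toReal_ofReal (by positivity), Gamma_add_one hn'.ne', nsmul_eq_mul]
  field_simp

theorem integral_annulus_pC {n : ℕ} (hn : 1 ≤ n) {a b : ℝ} (ha : 0 ≤ a) (hab : a ≤ b) :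
    ∫ y in {y : EuclideanSpace ℝ (Fin n) | a ≤ ‖y‖ ∧ ‖y‖ ≤ b}, pC n y =
      2 * Gamma (((n : ℝ) + 1) / 2) / (√π * Gamma (n / 2)) *
        ∫ r in a..b, r ^ (n - 1) * (1 + r ^ 2) ^ (-(((n : ℝ) + 1) / 2)) := by
  have : Nonempty (Fin n) := ⟨⟨0, hn⟩⟩
  set p : ℝ := ((n : ℝ) + 1) / 2
  have hπ : π ^ p = √π ^ n * √π := by
    rw [← pow_succ, sqrt_eq_rpow, ← rpow_natCast, ← rpow_mul pi_pos.le]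
    congr 1
    push_cast
    ring
  refine (integral_annulus_fun_norm_addHaar volume
    (fun r => Gamma p / π ^ p * (1 + r ^ 2) ^ (-p)) ha hab).trans ?_
  rw [finrank_euclideanSpace_fin, smul_eq_mul, ← smul_mul_assoc,
    EuclideanSpace.nsmul_measureReal_ball_zero_one (by omega)]
  simp only [smul_eq_mul, mul_left_comm _ (Gamma p / π ^ p), intervalIntegral.integral_const_mul]
  rw [hπ]
  field_simp

theorem intervalIntegral.integral_comp_div_sq {a b c : ℝ} (ha : 0 < a) (hab : a ≤ b) (hc : 0 < c)
    {g : ℝ → ℝ} (hg : ContinuousOn g (Ioi 0)) :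
    ∫ t in c / b ^ 2..c / a ^ 2, g t = ∫ r in a..b, 2 * c / r ^ 3 * g (c / r ^ 2) := by
  have hpos : ∀ x ∈ uIcc a b, 0 < x := fun x hx =>
    ha.trans_le (by rw [uIcc_of_le hab] at hx; exact hx.1)
  have hderiv : ∀ x ∈ uIcc a b, HasDerivAt (fun r => c / r ^ 2) (-(2 * c / x ^ 3)) x := by
    intro x hx
    have hx0 := (hpos x hx).ne'
    refine ((hasDerivAt_const x c).div (hasDerivAt_pow 2 x) (by positivity)).congr_deriv ?_
    field_simp
    ring
  have hcont : ContinuousOn (fun x => -(2 * c / x ^ 3)) (uIcc a b) :=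
    (continuousOn_const.div (by fun_prop) fun x hx => by have := hpos x hx; positivity).neg
  have hgcont : ContinuousOn g ((fun r => c / r ^ 2) '' uIcc a b) :=
    hg.mono (by rintro _ ⟨x, hx, rfl⟩; have := hpos x hx; exact div_pos hc (by positivity))
  rw [integral_symm, ← integral_comp_mul_deriv' hderiv hcont hgcont, ← integral_neg]
  congr 1 with r
  simp only [Function.comp_apply]
  ring

theorem integral_rpow_neg_half_mul_exp_neg {a b c : ℝ} (ha : 0 < a) (hab : a ≤ b) (hc : 0 < c) :
    ∫ t in c / b ^ 2..c / a ^ 2, t ^ (-(1 : ℝ) / 2) * exp (-t) =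
      2 * √c * ∫ r in a..b, (r ^ 2)⁻¹ * exp (-c / r ^ 2) := by
  have hg : ContinuousOn (fun t : ℝ => t ^ (-(1 : ℝ) / 2) * exp (-t)) (Ioi 0) :=
    ((continuousOn_id.rpow_const fun t ht => Or.inl (ne_of_gt ht)).mul (by fun_prop))
  rw [integral_comp_div_sq ha hab hc hg, ← intervalIntegral.integral_const_mul]
  refine integral_congr fun r hr => ?_
  have hr : 0 < r := ha.trans_le (by rw [uIcc_of_le hab] at hr; exact hr.1)
  have hsqrt : (c / r ^ 2) ^ (-(1 : ℝ) / 2) = r / √c := by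
    rw [neg_div, rpow_neg (by positivity), ← sqrt_eq_rpow, sqrt_div hc.le, sqrt_sq hr.le, inv_div]
  have hc' : 0 < √c := sqrt_pos.2 hc
  rw [hsqrt, neg_div]
  field_simp
  rw [sq_sqrt hc.le]

theorem integral_inv_sq_mul_exp_neg_div_sq_le {n : ℕ} (hn : 1 ≤ n) {a b : ℝ} (ha : 0 < a)
    (hab : a ≤ b) :
    ∫ r in a..b, (r ^ 2)⁻¹ * exp (-(((n : ℝ) + 1) / 2) / r ^ 2) ≤
      ∫ r in a..b, r ^ (n - 1) * (1 + r ^ 2) ^ (-(((n : ℝ) + 1) / 2)) := by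
  have hsq : ∀ r ∈ uIcc a b, r ^ 2 ≠ 0 := fun r hr =>
    pow_ne_zero 2 (ha.trans_le (by rw [uIcc_of_le hab] at hr; exact hr.1)).ne'
  refine integral_mono_on hab ?_ ?_ fun r hr => inv_sq_mul_exp_neg_div_sq_le hn (ha.trans_le hr.1)
  · exact ContinuousOn.intervalIntegrable (by fun_prop (disch := exact hsq))
  · exact ((continuous_pow _).mul ((by fun_prop : Continuous fun r : ℝ => 1 + r ^ 2).rpow_const
      fun r => Or.inl (by positivity))).intervalIntegrable _ _

/-- Lower bound for the Cauchy mass of the annulus: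
`∫_{a ≤ ‖y‖ ≤ b} p_C ≥ (1/√π)·(Γ((n+1)/2)/Γ(n/2))·√(2/(n+1))·
∫_{(n+1)/(2b²)}^{(n+1)/(2a²)} t^{-1/2} e^{-t} dt`. -/
theorem cauchy_annulus_lower_bound
    (n : ℕ) (hn : 1 ≤ n) (a b : ℝ) (ha : 0 < a) (hab : a < b) :
    (∫ y in {y : EuclideanSpace ℝ (Fin n) | a ≤ ‖y‖ ∧ ‖y‖ ≤ b}, pC n y) ≥
      (1 / Real.sqrt π) * (Real.Gamma (((n : ℝ) + 1) / 2) / Real.Gamma ((n : ℝ) / 2)) *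
        Real.sqrt (2 / ((n : ℝ) + 1)) *
        ∫ t in (((n : ℝ) + 1) / (2 * b ^ 2))..(((n : ℝ) + 1) / (2 * a ^ 2)),
          t ^ (-(1 : ℝ) / 2) * Real.exp (-t) := by
  have hsub (x : ℝ) : ((n : ℝ) + 1) / (2 * x ^ 2) = ((n : ℝ) + 1) / 2 / x ^ 2 := by ring
  rw [ge_iff_le, hsub, hsub, integral_rpow_neg_half_mul_exp_neg ha hab.le (by positivity),
    integral_annulus_pC hn ha.le hab.le]
  set p : ℝ := ((n : ℝ) + 1) / 2 with hp
  have hsqrt : √(2 / ((n : ℝ) + 1)) * √p = 1 := by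
    rw [← sqrt_mul (by positivity), hp, div_mul_div_comm, mul_comm, div_self (by positivity),
      sqrt_one]
  calc _ = 2 * Gamma p / (√π * Gamma (n / 2)) * ∫ r in a..b, (r ^ 2)⁻¹ * exp (-p / r ^ 2) := by
        linear_combination (2 * Gamma p / (√π * Gamma (n / 2)) *
          ∫ r in a..b, (r ^ 2)⁻¹ * exp (-p / r ^ 2)) * hsqrt
    _ ≤ _ := by
      gcongr
      exact integral_inv_sq_mul_exp_neg_div_sq_le hn ha hab.le
end
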